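/- Lemma A.5: In any disclosure game, let A ⊆ E be nonempty and suppose the minimization problem min_L ξ(L), over all lower contour sets L in A, admits a minimizer. Then it has a largest minimizer: there is a lower contour set L* in A minimizing ξ such that every lower contour set in A minimizing ξ is contained in L*. -/

import Mathlib

/-!
With `m` the minimal value of `ν`, the condition `ν(L) ≤ m` is a linear inequality between two
additive masses of `L`. Lower contour sets are closed under unions and nonempty intersections, so
by modularity of the masses the minimizers are closed under finite unions. Every finite part of
their union `L*` therefore lies in a single minimizer, which gives `ν(L*) ≤ m`; so `L*` is a
minimizer, and it contains every other one.
-/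

open scoped BigOperators

universe u

/-- A disclosure game: a countable evidence space `E` with a disclosure rule
(a preorder `r`, where `r m e` means message `m` is feasible for endowment `e`)
satisfying the lower-bound condition (A4′), a prior `π0 ∈ (0,1)`, evidence
distributions `FG`, `FB` in each state, and a strictly increasing receiver
response `φ` on `[0,1]`. -/
structure DGame (E : Type u) where
  r : E → E → Prop
  r_refl : ∀ e, r e e
  r_trans : ∀ {a b c : E}, r a b → r b c → r a c
  a4 : ∀ f : ℕ → E, (∀ n, r (f (n + 1)) (f n)) → ∃ N, ∀ n ≥ N, r (f N) (f n)
  π0 : ℝ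
  π0_pos : 0 < π0
  π0_lt_one : π0 < 1
  FG : E → ℝ
  FB : E → ℝ
  FG_nonneg : ∀ e, 0 ≤ FG e
  FB_nonneg : ∀ e, 0 ≤ FB e
  FG_hasSum : HasSum FG 1
  FB_hasSum : HasSum FB 1
  FGB_pos : ∀ e, 0 < FG e + FB e
  φ : ℝ → ℝ
  φ_mono : StrictMonoOn φ (Set.Icc (0 : ℝ) 1)

namespace DGame

variable {E : Type u} (G : DGame E)

/-- The posterior belief `ν(A)` that the state is good conditional on the
evidence lying in `A`. -/
noncomputable def nu (A : Set E) : ℝ :=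
  ((∑' e : A, G.FG e) * G.π0) /
    ((∑' e : A, G.FG e) * G.π0 + (∑' e : A, G.FB e) * (1 - G.π0))

/-- `ξ(A) = φ(ν(A))`. -/
noncomputable def xi (A : Set E) : ℝ := G.φ (G.nu A)

/-- `L` is a (nonempty) lower contour set in `A`. -/
def IsLCS (A L : Set E) : Prop :=
  L.Nonempty ∧ L ⊆ A ∧ ∀ e ∈ L, ∀ e' ∈ A, G.r e' e → e' ∈ L

/-- The Theorem-1 conditions on a candidate value function `V`. -/
def Thm1Conds (V : E → ℝ) : Prop :=
  (∀ e e', G.r e e' → V e ≤ V e') ∧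
  (∀ x ∈ Set.range V, G.xi (V ⁻¹' {x}) = x) ∧
  (∀ x ∈ Set.range V, ∀ L : Set E, G.IsLCS (V ⁻¹' {x}) L → x ≤ G.xi L)

/-- A truth-leaning equilibrium `(σ, act, μ)` of the disclosure game. -/
structure Eqm where
  σ : E → E → ℝ
  act : E → ℝ
  μ : E → ℝ
  σ_nonneg : ∀ e m, 0 ≤ σ e m
  σ_hasSum : ∀ e, HasSum (σ e) 1
  feasible : ∀ e m, 0 < σ e m → G.r m e
  μ_mem : ∀ m, μ m ∈ Set.Icc (0 : ℝ) 1
  sender_opt : ∀ e m, 0 < σ e m → ∀ m', G.r m' e → act m' ≤ act m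
  receiver_opt : ∀ m, act m = G.φ (μ m)
  bayes : ∀ m, (∃ e, 0 < σ e m) →
    μ m = (∑' e : {e : E // G.r m e}, σ e.1 m * G.FG e.1 * G.π0) /
      (∑' e : {e : E // G.r m e}, σ e.1 m * (G.FG e.1 * G.π0 + G.FB e.1 * (1 - G.π0)))
  truth_leaning : ∀ e, (∀ m, G.r m e → act m ≤ act e) → σ e e = 1
  offpath : ∀ m, (¬ ∃ e, 0 < σ e m) → μ m = G.nu {m}

/-- `V` is the sender's value function of the equilibrium `Q`. -/
def IsValueFn (Q : G.Eqm) (V : E → ℝ) : Prop :=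
  ∀ e m, 0 < Q.σ e m → V e = Q.act m

end DGame

section TsumSubtype

open Set

variable {α : Type*} {f g : α → ℝ}

theorem Summable.tsum_subtype_union_add_tsum_subtype_inter (hf : Summable f) (S T : Set α) :
    ∑' x : ↥(S ∪ T), f x + ∑' x : ↥(S ∩ T), f x = ∑' x : S, f x + ∑' x : T, f x := by
  simp only [tsum_subtype]
  rw [← (hf.indicator _).tsum_add (hf.indicator _), ← (hf.indicator _).tsum_add (hf.indicator _)]
  simp only [indicator_union_add_inter_apply]

theorem Summable.tsum_subtype_mono (hf : Summable f) (hf0 : 0 ≤ f) {S T : Set α} (h : S ⊆ T) :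
    ∑' x : S, f x ≤ ∑' x : T, f x := by
  simp only [tsum_subtype]
  exact (hf.indicator S).tsum_le_tsum (fun x => indicator_le_indicator_of_subset h (hf0 ·) x)
    (hf.indicator T)

theorem tsum_sUnion_le_of_directedOn (hf : Summable f) (hf0 : 0 ≤ f) (hg : Summable g)
    (hg0 : 0 ≤ g) {𝓜 : Set (Set α)} (hne : 𝓜.Nonempty) (hdir : DirectedOn (· ⊆ ·) 𝓜)
    (h : ∀ K ∈ 𝓜, ∑' x : K, f x ≤ ∑' x : K, g x) :
    ∑' x : ↥(⋃₀ 𝓜), f x ≤ ∑' x : ↥(⋃₀ 𝓜), g x := by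
  rw [tsum_subtype (⋃₀ 𝓜) f]
  refine (hf.indicator _).tsum_le_of_sum_le fun s => ?_
  obtain ⟨K, hK, hsK⟩ := hdir.exists_mem_subset_of_finite_of_subset_sUnion hne
    (s.finite_toSet.inter_of_left (⋃₀ 𝓜)) inter_subset_right
  calc ∑ x ∈ s, (⋃₀ 𝓜).indicator f x
      ≤ ∑ x ∈ s, K.indicator f x := by
        refine Finset.sum_le_sum fun x hx => ?_
        by_cases hxU : x ∈ ⋃₀ 𝓜
        · rw [indicator_of_mem hxU, indicator_of_mem (hsK ⟨hx, hxU⟩)]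
        · rw [indicator_of_notMem hxU]
          exact indicator_nonneg (fun y _ => hf0 y) x
    _ ≤ ∑' x : K, f x := by
        rw [tsum_subtype]
        exact (hf.indicator K).sum_le_tsum s fun x _ => indicator_nonneg (fun y _ => hf0 y) x
    _ ≤ ∑' x : K, g x := h K hK
    _ ≤ ∑' x : ↥(⋃₀ 𝓜), g x := hg.tsum_subtype_mono hg0 (subset_sUnion_of_mem hK)

end TsumSubtype

namespace DGame

open Set

variable {E : Type u} (G : DGame E)

theorem summable_FG : Summable G.FG := G.FG_hasSum.summable

theorem summable_FB : Summable G.FB := G.FB_hasSum.summable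

theorem posterior_denom_pos (e : E) : 0 < G.FG e * G.π0 + G.FB e * (1 - G.π0) := by
  have hπ : 0 < 1 - G.π0 := sub_pos.2 G.π0_lt_one
  rcases (G.FG_nonneg e).eq_or_lt with hG | hG
  · have hB : 0 < G.FB e := by simpa [← hG] using G.FGB_pos e
    rw [← hG, zero_mul, zero_add]
    exact mul_pos hB hπ
  · exact add_pos_of_pos_of_nonneg (mul_pos hG G.π0_pos) (mul_nonneg (G.FB_nonneg e) hπ.le)

theorem nu_denom_pos {S : Set E} (hS : S.Nonempty) :
    0 < (∑' e : S, G.FG e) * G.π0 + (∑' e : S, G.FB e) * (1 - G.π0) := by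
  obtain ⟨e, he⟩ := hS
  have hG : G.FG e ≤ ∑' e : S, G.FG e :=
    (G.summable_FG.subtype S).le_tsum ⟨e, he⟩ fun _ _ => G.FG_nonneg _
  have hB : G.FB e ≤ ∑' e : S, G.FB e :=
    (G.summable_FB.subtype S).le_tsum ⟨e, he⟩ fun _ _ => G.FB_nonneg _
  have := G.posterior_denom_pos e
  have := G.π0_pos
  have := G.π0_lt_one
  nlinarith

theorem nu_mem_Icc {S : Set E} (hS : S.Nonempty) : G.nu S ∈ Icc (0 : ℝ) 1 := by
  have hd := G.nu_denom_pos hS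
  have hG : 0 ≤ (∑' e : S, G.FG e) * G.π0 :=
    mul_nonneg (tsum_nonneg fun e => G.FG_nonneg e) G.π0_pos.le
  have hB : 0 ≤ (∑' e : S, G.FB e) * (1 - G.π0) :=
    mul_nonneg (tsum_nonneg fun e => G.FB_nonneg e) (sub_nonneg.2 G.π0_lt_one.le)
  exact ⟨div_nonneg hG hd.le, (div_le_one hd).2 (by linarith)⟩

theorem xi_le_xi_iff {S T : Set E} (hS : S.Nonempty) (hT : T.Nonempty) :
    G.xi S ≤ G.xi T ↔ G.nu S ≤ G.nu T :=
  G.φ_mono.le_iff_le (G.nu_mem_Icc hS) (G.nu_mem_Icc hT)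

/-- `ν(S) ≤ m` iff the `goodWeight m`-mass of `S` is at most its `badWeight m`-mass (`nu_le_iff`);
unlike `ν`, these masses are additive in `S`. -/
def goodWeight (m : ℝ) (e : E) : ℝ := (1 - m) * (G.FG e * G.π0)

def badWeight (m : ℝ) (e : E) : ℝ := m * (G.FB e * (1 - G.π0))

theorem summable_goodWeight (m : ℝ) : Summable (G.goodWeight m) :=
  (G.summable_FG.mul_right _).mul_left _

theorem summable_badWeight (m : ℝ) : Summable (G.badWeight m) :=
  (G.summable_FB.mul_right _).mul_left _

theorem goodWeight_nonneg {m : ℝ} (hm : m ≤ 1) : 0 ≤ G.goodWeight m := fun e =>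
  mul_nonneg (sub_nonneg.2 hm) (mul_nonneg (G.FG_nonneg e) G.π0_pos.le)

theorem badWeight_nonneg {m : ℝ} (hm : 0 ≤ m) : 0 ≤ G.badWeight m := fun e =>
  mul_nonneg hm (mul_nonneg (G.FB_nonneg e) (sub_nonneg.2 G.π0_lt_one.le))

theorem nu_le_iff {S : Set E} (hS : S.Nonempty) (m : ℝ) :
    G.nu S ≤ m ↔ ∑' e : S, G.goodWeight m e ≤ ∑' e : S, G.badWeight m e := by
  simp only [goodWeight, badWeight, tsum_mul_left, tsum_mul_right]
  rw [nu, div_le_iff₀ (G.nu_denom_pos hS)]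
  constructor <;> intro h <;> linarith

theorem le_nu_iff {S : Set E} (hS : S.Nonempty) (m : ℝ) :
    m ≤ G.nu S ↔ ∑' e : S, G.badWeight m e ≤ ∑' e : S, G.goodWeight m e := by
  simp only [goodWeight, badWeight, tsum_mul_left, tsum_mul_right]
  rw [nu, le_div_iff₀ (G.nu_denom_pos hS)]
  constructor <;> intro h <;> linarith

variable {G} {A L₁ L₂ : Set E}

theorem IsLCS.union (h₁ : G.IsLCS A L₁) (h₂ : G.IsLCS A L₂) : G.IsLCS A (L₁ ∪ L₂) :=
  ⟨h₁.1.mono subset_union_left, union_subset h₁.2.1 h₂.2.1, fun e he e' he' hr =>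
    he.imp (fun he => h₁.2.2 e he e' he' hr) (fun he => h₂.2.2 e he e' he' hr)⟩

theorem IsLCS.inter (h₁ : G.IsLCS A L₁) (h₂ : G.IsLCS A L₂) (hne : (L₁ ∩ L₂).Nonempty) :
    G.IsLCS A (L₁ ∩ L₂) :=
  ⟨hne, inter_subset_left.trans h₁.2.1, fun e he e' he' hr =>
    ⟨h₁.2.2 e he.1 e' he' hr, h₂.2.2 e he.2 e' he' hr⟩⟩

theorem IsLCS.sUnion {𝓜 : Set (Set E)} (hne : 𝓜.Nonempty) (h : ∀ L ∈ 𝓜, G.IsLCS A L) :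
    G.IsLCS A (⋃₀ 𝓜) := by
  obtain ⟨L, hL⟩ := hne
  refine ⟨(h L hL).1.mono (subset_sUnion_of_mem hL), sUnion_subset fun L hL => (h L hL).2.1, ?_⟩
  rintro e ⟨L, hL, heL⟩ e' he' hr
  exact ⟨L, hL, (h L hL).2.2 e heL e' he' hr⟩

/-- The mass inequality for `L₁ ∪ L₂` is the sum of those for `L₁` and `L₂` and the reversed one
for `L₁ ∩ L₂` (a lower contour set, or empty), by modularity of the masses. -/
theorem nu_union_le {m : ℝ} (hm : ∀ L, G.IsLCS A L → m ≤ G.nu L)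
    (h₁ : G.IsLCS A L₁) (h₂ : G.IsLCS A L₂) (hL₁ : G.nu L₁ ≤ m) (hL₂ : G.nu L₂ ≤ m) :
    G.nu (L₁ ∪ L₂) ≤ m := by
  have hinter : ∑' e : ↥(L₁ ∩ L₂), G.badWeight m e ≤ ∑' e : ↥(L₁ ∩ L₂), G.goodWeight m e := by
    rcases (L₁ ∩ L₂).eq_empty_or_nonempty with hempty | hne
    · simp [hempty]
    · exact (G.le_nu_iff hne m).1 (hm _ (h₁.inter h₂ hne))
  rw [G.nu_le_iff h₁.1] at hL₁
  rw [G.nu_le_iff h₂.1] at hL₂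
  rw [G.nu_le_iff (h₁.union h₂).1]
  linarith [(G.summable_goodWeight m).tsum_subtype_union_add_tsum_subtype_inter L₁ L₂,
    (G.summable_badWeight m).tsum_subtype_union_add_tsum_subtype_inter L₁ L₂]

variable (G) in
theorem nu_sUnion_le {m : ℝ} (hm : m ∈ Icc (0 : ℝ) 1) {𝓜 : Set (Set E)} (hne : 𝓜.Nonempty)
    (hdir : DirectedOn (· ⊆ ·) 𝓜) (h : ∀ K ∈ 𝓜, K.Nonempty ∧ G.nu K ≤ m) :
    G.nu (⋃₀ 𝓜) ≤ m := by
  obtain ⟨K, hK⟩ := hne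
  rw [G.nu_le_iff ((h K hK).1.mono (subset_sUnion_of_mem hK))]
  exact tsum_sUnion_le_of_directedOn (G.summable_goodWeight m) (G.goodWeight_nonneg hm.2)
    (G.summable_badWeight m) (G.badWeight_nonneg hm.1) ⟨K, hK⟩ hdir
    fun K hK => (G.nu_le_iff (h K hK).1 m).1 (h K hK).2

end DGame

theorem stmt_8_general {E : Type u} (G : DGame E) (A : Set E)
    (h : ∃ L : Set E, G.IsLCS A L ∧ ∀ L' : Set E, G.IsLCS A L' → G.xi L ≤ G.xi L') :
    ∃ Lstar : Set E, G.IsLCS A Lstar ∧ (∀ L' : Set E, G.IsLCS A L' → G.xi Lstar ≤ G.xi L') ∧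
      ∀ L' : Set E, G.IsLCS A L' → (∀ L'' : Set E, G.IsLCS A L'' → G.xi L' ≤ G.xi L'') →
        L' ⊆ Lstar := by
  obtain ⟨L₀, hL₀, hmin⟩ := h
  set m := G.nu L₀
  have hm : ∀ L, G.IsLCS A L → m ≤ G.nu L := fun L hL =>
    (G.xi_le_xi_iff hL₀.1 hL.1).1 (hmin L hL)
  set 𝓜 := {L | G.IsLCS A L ∧ G.nu L ≤ m}
  have h𝓜 : 𝓜.Nonempty := ⟨L₀, hL₀, le_rfl⟩
  have hdir : DirectedOn (· ⊆ ·) 𝓜 := fun L₁ h₁ L₂ h₂ =>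
    ⟨L₁ ∪ L₂, ⟨h₁.1.union h₂.1, DGame.nu_union_le hm h₁.1 h₂.1 h₁.2 h₂.2⟩,
      Set.subset_union_left, Set.subset_union_right⟩
  have hstar : G.IsLCS A (⋃₀ 𝓜) := DGame.IsLCS.sUnion h𝓜 fun L hL => hL.1
  have hnu : G.nu (⋃₀ 𝓜) ≤ m :=
    G.nu_sUnion_le (G.nu_mem_Icc hL₀.1) h𝓜 hdir fun K hK => ⟨hK.1.1, hK.2⟩
  refine ⟨⋃₀ 𝓜, hstar, fun L hL => (G.xi_le_xi_iff hstar.1 hL.1).2 (hnu.trans (hm L hL)),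
    fun L hL hLmin => Set.subset_sUnion_of_mem ⟨hL, ?_⟩⟩
  exact (G.xi_le_xi_iff hL.1 hL₀.1).1 (hLmin L₀ hL₀)

/-- Lemma A.5: if the problem of minimizing `ξ` over lower contour sets in `A`
admits a minimizer, then it has a largest minimizer. -/
theorem stmt_8 {E : Type u} [Countable E] (G : DGame E) (A : Set E) (hA : A.Nonempty)
    (h : ∃ L : Set E, G.IsLCS A L ∧ ∀ L' : Set E, G.IsLCS A L' → G.xi L ≤ G.xi L') :
    ∃ Lstar : Set E, G.IsLCS A Lstar ∧ (∀ L' : Set E, G.IsLCS A L' → G.xi Lstar ≤ G.xi L') ∧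
      ∀ L' : Set E, G.IsLCS A L' → (∀ L'' : Set E, G.IsLCS A L'' → G.xi L' ≤ G.xi L'') →
        L' ⊆ Lstar :=
  stmt_8_general G A h
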